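/- If m ≥ 3, then the minimum quality q_min is non-decreasing as a set function on finite subsets of {1,…,N} × {1,…,m}: for all S ⊆ T, q_min(S) ≤ q_min(T). -/

import Mathlib

/-!
Adding executed slots only adds distances `≤ m` to the multiset from which the padded `k`-NN
sum is taken, and a new entry `≤ m` can only replace a larger one among the `k` smallest or a
padding term `m`; so `I_k` decreases, `ρ` decreases and `p` increases. All `p` lie in
`[0, 1/m]`, and for `m ≥ 3` this is inside `[0, e⁻¹]`, where `x ↦ -x log x` is increasing.
Hence each task quality is monotone in its slot set, and so is their minimum.
-/

/-- Temporal distance between slots `j` and `e`. -/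
def tdist (j e : ℕ) : ℕ := ((j : ℤ) - (e : ℤ)).natAbs

/-- Padded `k`-NN distance sum `I_k^S(j)`. -/
def Ik (m k : ℕ) (S : Finset ℕ) (j : ℕ) : ℕ :=
  if k ≤ S.card then
    (((S.val.map (fun e => tdist j e)).sort (· ≤ ·)).take k).sum
  else
    (S.val.map (fun e => tdist j e)).sum + (k - S.card) * m

/-- Interpolation error ratio `ρ^S(j)`. -/
noncomputable def rho (m k : ℕ) (S : Finset ℕ) (j : ℕ) : ℝ :=
  if j ∈ S then 0 else (Ik m k S j : ℝ) / ((k : ℝ) * (m : ℝ))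

/-- Subtask finishing probability `p^S(j)`. -/
noncomputable def prob (m k : ℕ) (S : Finset ℕ) (j : ℕ) : ℝ :=
  (1 / (m : ℝ)) * (1 - rho m k S j)

/-- Task quality `q(S)` (note `Real.logb 2 0 = 0`, so the convention
`0 · log₂ 0 = 0` holds definitionally). -/
noncomputable def quality (m k : ℕ) (S : Finset ℕ) : ℝ :=
  ∑ j ∈ Finset.Icc 1 m, -(prob m k S j * Real.logb 2 (prob m k S j))

/-- The set of slots assigned within task `i`. -/
def taskSlice (S : Finset (ℕ × ℕ)) (i : ℕ) : Finset ℕ :=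
  (S.filter (fun x => x.1 = i)).image Prod.snd

/-- The summation quality `q_sum`. -/
noncomputable def qsum (m k N : ℕ) (S : Finset (ℕ × ℕ)) : ℝ :=
  ∑ i ∈ Finset.Icc 1 N, quality m k (taskSlice S i)

/-- The minimum quality `q_min`. -/
noncomputable def qmin (m k N : ℕ) (hN : 1 ≤ N) (S : Finset (ℕ × ℕ)) : ℝ :=
  (Finset.Icc 1 N).inf' (Finset.nonempty_Icc.mpr hN)
    (fun i => quality m k (taskSlice S i))

section SmallestSum

variable {α : Type*} [AddCommMonoid α] [LinearOrder α] [IsOrderedAddMonoid α]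

theorem List.sum_take_cons_le {c : α} {l : List α} {k : ℕ} (hc : ∀ x ∈ l, c ≤ x)
    (hk : k ≤ l.length) : ((c :: l).take k).sum ≤ (l.take k).sum := by
  cases k with
  | zero => simp
  | succ k =>
    rw [List.take_succ_cons, List.sum_cons, List.sum_take_succ _ _ hk, add_comm]
    exact add_le_add_right (hc _ (List.getElem_mem _)) _

theorem List.sum_take_orderedInsert_le (a : α) {l : List α} (hl : l.Pairwise (· ≤ ·)) {k : ℕ}
    (hk : k ≤ l.length) : ((l.orderedInsert (· ≤ ·) a).take k).sum ≤ (l.take k).sum := by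
  induction l generalizing k with
  | nil => simp_all
  | cons b l ih =>
    obtain ⟨hb, hl⟩ := List.pairwise_cons.mp hl
    by_cases hab : a ≤ b
    · rw [List.orderedInsert, if_pos hab]
      refine List.sum_take_cons_le (fun x hx => ?_) hk
      rcases List.mem_cons.mp hx with rfl | hx
      exacts [hab, hab.trans (hb x hx)]
    · cases k with
      | zero => simp
      | succ k =>
        rw [List.orderedInsert, if_neg hab, List.take_succ_cons, List.take_succ_cons,
          List.sum_cons, List.sum_cons]
        gcongr
        exact ih hl (by simpa using hk)

end SmallestSum

theorem Multiset.sort_cons_eq_orderedInsert {α : Type*} [LinearOrder α] (a : α)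
    (s : Multiset α) :
    (a ::ₘ s).sort (· ≤ ·) = (s.sort (· ≤ ·)).orderedInsert (· ≤ ·) a :=
  Quot.inductionOn s fun l => by simp [List.mergeSort_eq_insertionSort]

/-- `Ik` with an arbitrary multiset of distances in place of those from `j` to `S`, so that
elements can be added one at a time. -/
def paddedSmallestSum (m k : ℕ) (M : Multiset ℕ) : ℕ :=
  if k ≤ Multiset.card M then ((M.sort (· ≤ ·)).take k).sum
  else M.sum + (k - Multiset.card M) * m

theorem paddedSmallestSum_cons_le {m d : ℕ} (hd : d ≤ m) (k : ℕ) (M : Multiset ℕ) :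
    paddedSmallestSum m k (d ::ₘ M) ≤ paddedSmallestSum m k M := by
  unfold paddedSmallestSum
  rw [Multiset.card_cons]
  rcases lt_trichotomy k (Multiset.card M + 1) with hk | rfl | hk
  · rw [if_pos hk.le, if_pos (Nat.le_of_lt_succ hk), Multiset.sort_cons_eq_orderedInsert]
    exact List.sum_take_orderedInsert_le d (Multiset.pairwise_sort _ _)
      (by rw [Multiset.length_sort]; omega)
  · rw [if_pos le_rfl, if_neg (by omega), List.take_of_length_le (by simp),
      ← Multiset.sum_coe, Multiset.sort_eq, Multiset.sum_cons]
    simp only [add_tsub_cancel_left, one_mul]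
    omega
  · rw [if_neg hk.not_ge, if_neg (by omega), Multiset.sum_cons,
      show k - Multiset.card M = k - (Multiset.card M + 1) + 1 by omega, add_mul, one_mul]
    omega

theorem paddedSmallestSum_antitone {m : ℕ} (k : ℕ) {M M' : Multiset ℕ} (hMM' : M ≤ M')
    (hM' : ∀ x ∈ M', x ≤ m) : paddedSmallestSum m k M' ≤ paddedSmallestSum m k M := by
  obtain ⟨D, rfl⟩ := Multiset.le_iff_exists_add.mp hMM'
  induction D using Multiset.induction with
  | empty => simp
  | cons d D ih =>
    rw [Multiset.add_cons] at hM' ⊢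
    exact (paddedSmallestSum_cons_le (hM' d (Multiset.mem_cons_self d _)) k _).trans
      (ih (Multiset.le_add_right _ _) fun x hx => hM' x (Multiset.mem_cons_of_mem hx))

theorem paddedSmallestSum_le {m : ℕ} (k : ℕ) {M : Multiset ℕ} (hM : ∀ x ∈ M, x ≤ m) :
    paddedSmallestSum m k M ≤ k * m := by
  unfold paddedSmallestSum
  split_ifs with hk
  · calc ((M.sort (· ≤ ·)).take k).sum ≤ ((M.sort (· ≤ ·)).take k).length * m :=
          List.sum_le_card_nsmul _ _ fun x hx =>
            hM x ((Multiset.mem_sort _).mp (List.mem_of_mem_take hx))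
      _ ≤ k * m := Nat.mul_le_mul_right m (List.length_take_le k _)
  · have := Multiset.sum_le_card_nsmul M m hM
    rw [smul_eq_mul] at this
    calc M.sum + (k - Multiset.card M) * m
        ≤ Multiset.card M * m + (k - Multiset.card M) * m := by omega
      _ = k * m := by rw [← add_mul, Nat.add_sub_cancel' (by omega)]

theorem Real.neg_mul_logb_monotoneOn {b : ℝ} (hb : 1 < b) :
    MonotoneOn (fun x => -(x * Real.logb b x)) (Set.Icc 0 (Real.exp (-1))) := by
  intro x hx y hy hxy
  simp only [Real.logb, ← mul_div_assoc, neg_le_neg_iff]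
  exact div_le_div_of_nonneg_right (Real.mul_log_strictAntiOn.antitoneOn hx hy hxy)
    (Real.log_pos hb).le

theorem Real.inv_le_exp_neg_one {x : ℝ} (hx : 3 ≤ x) : x⁻¹ ≤ Real.exp (-1) := by
  rw [Real.exp_neg]
  refine inv_anti₀ (Real.exp_pos 1) ?_
  linarith [Real.exp_one_lt_d9]

theorem tdist_le {m j e : ℕ} (hj : j ∈ Finset.Icc 1 m) (he : e ∈ Finset.Icc 1 m) :
    tdist j e ≤ m := by
  rw [Finset.mem_Icc] at hj he
  unfold tdist
  omega

section Slots

variable {m k : ℕ} {S T : Finset ℕ} {j : ℕ}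

theorem Ik_eq_paddedSmallestSum :
    Ik m k S j = paddedSmallestSum m k (S.val.map (tdist j)) := by
  simp only [Ik, paddedSmallestSum, Multiset.card_map, Finset.card_val]

theorem tdist_le_of_mem_map (hS : S ⊆ Finset.Icc 1 m) (hj : j ∈ Finset.Icc 1 m) :
    ∀ x ∈ S.val.map (tdist j), x ≤ m := by
  intro x hx
  obtain ⟨e, he, rfl⟩ := Multiset.mem_map.mp hx
  exact tdist_le hj (hS he)

theorem Ik_anti (hST : S ⊆ T) (hT : T ⊆ Finset.Icc 1 m) (hj : j ∈ Finset.Icc 1 m) :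
    Ik m k T j ≤ Ik m k S j := by
  rw [Ik_eq_paddedSmallestSum, Ik_eq_paddedSmallestSum]
  exact paddedSmallestSum_antitone k (Multiset.map_le_map (Finset.val_le_iff.mpr hST))
    (tdist_le_of_mem_map hT hj)

theorem Ik_le (hS : S ⊆ Finset.Icc 1 m) (hj : j ∈ Finset.Icc 1 m) : Ik m k S j ≤ k * m := by
  rw [Ik_eq_paddedSmallestSum]
  exact paddedSmallestSum_le k (tdist_le_of_mem_map hS hj)

theorem rho_nonneg : 0 ≤ rho m k S j := by
  unfold rho
  split_ifs <;> positivity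

theorem rho_le_one (hS : S ⊆ Finset.Icc 1 m) (hj : j ∈ Finset.Icc 1 m) : rho m k S j ≤ 1 := by
  unfold rho
  split_ifs
  · exact zero_le_one
  · exact div_le_one_of_le₀ (by exact_mod_cast Ik_le hS hj) (by positivity)

theorem rho_anti (hST : S ⊆ T) (hT : T ⊆ Finset.Icc 1 m) (hj : j ∈ Finset.Icc 1 m) :
    rho m k T j ≤ rho m k S j := by
  by_cases hjT : j ∈ T
  · rw [rho, if_pos hjT]
    exact rho_nonneg
  · rw [rho, if_neg hjT, rho, if_neg fun hjS => hjT (hST hjS)]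
    gcongr
    exact Ik_anti hST hT hj

theorem prob_mem_Icc (hS : S ⊆ Finset.Icc 1 m) (hj : j ∈ Finset.Icc 1 m) :
    prob m k S j ∈ Set.Icc 0 (m : ℝ)⁻¹ := by
  have h₀ := rho_nonneg (m := m) (k := k) (S := S) (j := j)
  have h₁ := rho_le_one (k := k) hS hj
  rw [prob, one_div]
  constructor
  · exact mul_nonneg (by positivity) (by linarith)
  · exact mul_le_of_le_one_right (by positivity) (by linarith)

theorem prob_mono (hST : S ⊆ T) (hT : T ⊆ Finset.Icc 1 m) (hj : j ∈ Finset.Icc 1 m) :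
    prob m k S j ≤ prob m k T j := by
  unfold prob
  gcongr
  exact rho_anti hST hT hj

theorem quality_mono (hm : 3 ≤ m) (hST : S ⊆ T) (hT : T ⊆ Finset.Icc 1 m) :
    quality m k S ≤ quality m k T := by
  have hm' : (m : ℝ)⁻¹ ≤ Real.exp (-1) := Real.inv_le_exp_neg_one (by exact_mod_cast hm)
  refine Finset.sum_le_sum fun j hj => Real.neg_mul_logb_monotoneOn one_lt_two ?_ ?_
    (prob_mono hST hT hj)
  · exact Set.Icc_subset_Icc_right hm' (prob_mem_Icc (hST.trans hT) hj)
  · exact Set.Icc_subset_Icc_right hm' (prob_mem_Icc hT hj)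

end Slots

theorem taskSlice_mono {S T : Finset (ℕ × ℕ)} (hST : S ⊆ T) (i : ℕ) :
    taskSlice S i ⊆ taskSlice T i :=
  Finset.image_subset_image (Finset.filter_subset_filter _ hST)

theorem taskSlice_subset_Icc {N m : ℕ} {T : Finset (ℕ × ℕ)}
    (hT : T ⊆ Finset.Icc 1 N ×ˢ Finset.Icc 1 m) (i : ℕ) :
    taskSlice T i ⊆ Finset.Icc 1 m := by
  intro x hx
  obtain ⟨p, hp, rfl⟩ := Finset.mem_image.mp hx
  exact (Finset.mem_product.mp (hT (Finset.mem_filter.mp hp).1)).2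

theorem qmin_nondecreasing_general (m k N : ℕ) (hm : 3 ≤ m) (hN : 1 ≤ N)
    (S T : Finset (ℕ × ℕ)) (hT : T ⊆ Finset.Icc 1 N ×ˢ Finset.Icc 1 m)
    (hST : S ⊆ T) :
    qmin m k N hN S ≤ qmin m k N hN T :=
  Finset.inf'_mono_fun fun i _ =>
    quality_mono hm (taskSlice_mono hST i) (taskSlice_subset_Icc hT i)

/-- If `m ≥ 3`, the minimum quality is non-decreasing. -/
theorem qmin_nondecreasing (m k N : ℕ) (hm : 3 ≤ m) (hk : 1 ≤ k) (hN : 1 ≤ N)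
    (S T : Finset (ℕ × ℕ)) (hT : T ⊆ Finset.Icc 1 N ×ˢ Finset.Icc 1 m)
    (hST : S ⊆ T) :
    qmin m k N hN S ≤ qmin m k N hN T :=
  qmin_nondecreasing_general m k N hm hN S T hT hST
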